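/- Let φ¹, φ², φ³ : ℝ² → ℝ be twice continuously differentiable, and define σ¹¹ = ∂₂φ¹, σ¹² = −∂₁φ¹, σ²¹ = −∂₂φ², σ²² = ∂₁φ², μ¹ = ∂₂φ³ + φ¹, μ² = −∂₁φ³ − φ². Then the homogeneous planar Cosserat equations hold identically: ∂₁σ¹¹ + ∂₂σ¹² = 0, ∂₁σ²¹ + ∂₂σ²² = 0, and ∂₁μ¹ + ∂₂μ² + σ¹² − σ²¹ = 0. -/

import Mathlib

/-! The three equations reduce to the symmetry `∂₁∂₂φ = ∂₂∂₁φ` of second partial derivatives: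
the zero-order terms `φ¹, φ²` of `μ` are exactly cancelled by the antisymmetric part
`σ¹² − σ²¹ = −∂₁φ¹ + ∂₂φ²` of the stress. -/

/-- Partial derivative with respect to the first variable of a function on `ℝ²`. -/
noncomputable def pd1 (f : ℝ × ℝ → ℝ) (x : ℝ × ℝ) : ℝ := fderiv ℝ f x (1, 0)

/-- Partial derivative with respect to the second variable of a function on `ℝ²`. -/
noncomputable def pd2 (f : ℝ × ℝ → ℝ) (x : ℝ × ℝ) : ℝ := fderiv ℝ f x (0, 1)

section DirectionalDerivative

variable {𝕜 E F : Type*} [RCLike 𝕜] [NormedAddCommGroup E] [NormedSpace 𝕜 E]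
  [NormedAddCommGroup F] [NormedSpace 𝕜 F] {f : E → F} {x : E}

theorem ContDiffAt.differentiableAt_fderiv_apply (hf : ContDiffAt 𝕜 2 f x) (w : E) :
    DifferentiableAt 𝕜 (fun y => fderiv 𝕜 f y w) x :=
  ((hf.fderiv_right (m := 1) le_rfl).differentiableAt one_ne_zero).clm_apply
    (differentiableAt_const w)

theorem ContDiffAt.fderiv_fderiv_apply_comm (hf : ContDiffAt 𝕜 2 f x) (v w : E) :
    fderiv 𝕜 (fun y => fderiv 𝕜 f y w) x v = fderiv 𝕜 (fun y => fderiv 𝕜 f y v) x w := by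
  have hdf : DifferentiableAt 𝕜 (fderiv 𝕜 f) x :=
    (hf.fderiv_right (m := 1) le_rfl).differentiableAt one_ne_zero
  rw [fderiv_clm_apply hdf (differentiableAt_const w),
    fderiv_clm_apply hdf (differentiableAt_const v)]
  simpa using hf.isSymmSndFDerivAt (by simp) v w

end DirectionalDerivative

theorem ContDiffAt.pd1_pd2_comm {f : ℝ × ℝ → ℝ} {x : ℝ × ℝ} (hf : ContDiffAt ℝ 2 f x) :
    pd1 (pd2 f) x = pd2 (pd1 f) x :=
  hf.fderiv_fderiv_apply_comm _ _

theorem ContDiffAt.differentiableAt_pd1 {f : ℝ × ℝ → ℝ} {x : ℝ × ℝ} (hf : ContDiffAt ℝ 2 f x) :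
    DifferentiableAt ℝ (pd1 f) x :=
  hf.differentiableAt_fderiv_apply _

theorem ContDiffAt.differentiableAt_pd2 {f : ℝ × ℝ → ℝ} {x : ℝ × ℝ} (hf : ContDiffAt ℝ 2 f x) :
    DifferentiableAt ℝ (pd2 f) x :=
  hf.differentiableAt_fderiv_apply _

theorem pd1_neg (f : ℝ × ℝ → ℝ) (x : ℝ × ℝ) : pd1 (fun y => -f y) x = -pd1 f x := by
  simp [pd1, fderiv_fun_neg]

theorem pd2_neg (f : ℝ × ℝ → ℝ) (x : ℝ × ℝ) : pd2 (fun y => -f y) x = -pd2 f x := by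
  simp [pd2, fderiv_fun_neg]

theorem pd1_add {f g : ℝ × ℝ → ℝ} {x : ℝ × ℝ} (hf : DifferentiableAt ℝ f x)
    (hg : DifferentiableAt ℝ g x) : pd1 (fun y => f y + g y) x = pd1 f x + pd1 g x := by
  simp [pd1, fderiv_fun_add hf hg]

theorem pd2_sub {f g : ℝ × ℝ → ℝ} {x : ℝ × ℝ} (hf : DifferentiableAt ℝ f x)
    (hg : DifferentiableAt ℝ g x) : pd2 (fun y => f y - g y) x = pd2 f x - pd2 g x := by
  simp [pd2, fderiv_fun_sub hf hg]

/-- The first-order parametrization of the planar Cosserat equations by three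
potentials `φ¹, φ², φ³`: setting `σ¹¹ = ∂₂φ¹`, `σ¹² = −∂₁φ¹`, `σ²¹ = −∂₂φ²`,
`σ²² = ∂₁φ²`, `μ¹ = ∂₂φ³ + φ¹`, `μ² = −∂₁φ³ − φ²`, the homogeneous planar
Cosserat equations hold identically. -/
theorem cosserat_first_order_parametrization
    (φ1 φ2 φ3 : ℝ × ℝ → ℝ)
    (hφ1 : ContDiff ℝ 2 φ1) (hφ2 : ContDiff ℝ 2 φ2) (hφ3 : ContDiff ℝ 2 φ3) :
    ∀ x : ℝ × ℝ,
      pd1 (fun y => pd2 φ1 y) x + pd2 (fun y => -pd1 φ1 y) x = 0 ∧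
      pd1 (fun y => -pd2 φ2 y) x + pd2 (fun y => pd1 φ2 y) x = 0 ∧
      pd1 (fun y => pd2 φ3 y + φ1 y) x + pd2 (fun y => -pd1 φ3 y - φ2 y) x
        + (-pd1 φ1 x) - (-pd2 φ2 x) = 0 := by
  intro x
  have h1 := hφ1.contDiffAt (x := x)
  have h2 := hφ2.contDiffAt (x := x)
  have h3 := hφ3.contDiffAt (x := x)
  have hμ1 : pd1 (fun y => pd2 φ3 y + φ1 y) x = pd1 (pd2 φ3) x + pd1 φ1 x :=
    pd1_add h3.differentiableAt_pd2 (h1.differentiableAt two_ne_zero)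
  have hμ2 : pd2 (fun y => -pd1 φ3 y - φ2 y) x = -pd2 (pd1 φ3) x - pd2 φ2 x := by
    rw [pd2_sub h3.differentiableAt_pd1.fun_neg (h2.differentiableAt two_ne_zero),
      pd2_neg]
  refine ⟨?_, ?_, ?_⟩
  · rw [pd2_neg, h1.pd1_pd2_comm, add_neg_cancel]
  · rw [pd1_neg, h2.pd1_pd2_comm, neg_add_cancel]
  · rw [hμ1, hμ2, h3.pd1_pd2_comm]
    ring
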